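/- arXiv:2406.01849 — 4 statements merged into one kernel-verified Lean document; each statement's English description precedes it below -/
import Mathlib

section
/- Let X be a random variable taking values in {a₁, …, aₙ} with a₁ < ⋯ < aₙ and ℙ(X = aᵢ) > 0 for all i, and let Y be a random variable taking values in {b₁, …, b_m} with b₁ < ⋯ < b_m and ℙ(Y = bⱼ) > 0 for all j. Then X and Y are stochastically independent if and only if for every i ≤ n and j ≤ m, setting U = {X ≤ aᵢ, Y ≤ bⱼ} (which has positive probability), one has E[XY | U] = E[X | U] · E[Y | U]. -/
/-!
Write `p k l = ℙ(X = a k, Y = b l)`. On the rectangle `U = {X ≤ a i, Y ≤ b j}`, the identity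
`E[XY | U] = E[X | U] E[Y | U]` says that the covariance of `X` and `Y` under `p` restricted to
`[0, i] × [0, j]` vanishes. By inclusion–exclusion over the four rectangles with corners
`(i, j)`, `(i-1, j)`, `(i, j-1)`, `(i-1, j-1)` this gives
`∑_{k < i, l < j} (a i - a k) (b j - b l) (p i j p k l - p i l p k j) = 0`,
a sum with positive weights of the `2 × 2` minors of `p` through the corner `(i, j)`.
Inducting on the corner, the minors through earlier corners vanish; then all the minors in the
sum are proportional to the entries `p k l` with one common factor (or, if these entries all
vanish, they are all `≤ 0`), so each of them is `0`. A nonnegative matrix all of whose `2 × 2`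
minors vanish is the product of its marginals, which is independence. Conversely, independence
factorises every integral over `U`.
-/

open MeasureTheory Set

/-- Conditional expectation of `Z` given the event `U`: `E[Z·1_U] / ℙ(U)`. -/
noncomputable def cexp {Ω : Type*} [MeasurableSpace Ω] (P : Measure Ω) (U : Set Ω)
    (Z : Ω → ℝ) : ℝ :=
  (∫ ω in U, Z ω ∂P) / (P U).toReal

section Covariance

open Finset

variable {α β : Type*}

/-- `(∑ p)²` times the covariance of `a` and `b` under the weights `p` on `s ×ˢ t`. -/
def rectCov (p : α → β → ℝ) (a : α → ℝ) (b : β → ℝ) (s : Finset α) (t : Finset β) : ℝ :=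
  (∑ k ∈ s, ∑ l ∈ t, a k * b l * p k l) * (∑ k ∈ s, ∑ l ∈ t, p k l)
    - (∑ k ∈ s, ∑ l ∈ t, a k * p k l) * (∑ k ∈ s, ∑ l ∈ t, b l * p k l)

lemma rectCov_insert_insert [DecidableEq α] [DecidableEq β] (p : α → β → ℝ) (a : α → ℝ)
    (b : β → ℝ) {s : Finset α} {t : Finset β} {i : α} {j : β} (hi : i ∉ s) (hj : j ∉ t) :
    rectCov p a b (insert i s) (insert j t) - rectCov p a b s (insert j t)
        - rectCov p a b (insert i s) t + rectCov p a b s t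
      = ∑ k ∈ s, ∑ l ∈ t, (a i - a k) * (b j - b l) * (p i j * p k l - p i l * p k j) := by
  have hrhs : ∑ k ∈ s, ∑ l ∈ t, (a i - a k) * (b j - b l) * (p i j * p k l - p i l * p k j)
      = p i j * (a i * b j * ∑ k ∈ s, ∑ l ∈ t, p k l - a i * ∑ k ∈ s, ∑ l ∈ t, b l * p k l
          - b j * ∑ k ∈ s, ∑ l ∈ t, a k * p k l + ∑ k ∈ s, ∑ l ∈ t, a k * b l * p k l)
        - (a i * ∑ k ∈ s, p k j - ∑ k ∈ s, a k * p k j)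
          * (b j * ∑ l ∈ t, p i l - ∑ l ∈ t, b l * p i l) := by
    have hterm : ∀ k l, (a i - a k) * (b j - b l) * (p i j * p k l - p i l * p k j)
        = p i j * (a i * b j * p k l - a i * (b l * p k l) - b j * (a k * p k l)
            + a k * b l * p k l) - (a i * p k j - a k * p k j) * (b j * p i l - b l * p i l) :=
      fun k l => by ring
    simp only [hterm, sum_sub_distrib, ← mul_sum, ← sum_mul, sum_add_distrib]
  have hrowAB : ∑ l ∈ t, a i * b l * p i l = a i * ∑ l ∈ t, b l * p i l := by
    simp only [mul_sum, mul_assoc]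
  have hrowA : ∑ l ∈ t, a i * p i l = a i * ∑ l ∈ t, p i l := (mul_sum ..).symm
  have hcolAB : ∑ k ∈ s, a k * b j * p k j = b j * ∑ k ∈ s, a k * p k j := by
    simp only [mul_sum]; exact sum_congr rfl fun _ _ => by ring
  have hcolB : ∑ k ∈ s, b j * p k j = b j * ∑ k ∈ s, p k j := (mul_sum ..).symm
  simp only [rectCov, sum_insert hi, sum_insert hj, sum_add_distrib, hrhs, hrowAB, hrowA, hcolAB, hcolB]
  ring

lemma sum_sum_eq_zero_iff_of_nonneg {s : Finset α} {t : Finset β} {f : α → β → ℝ}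
    (hf : ∀ k ∈ s, ∀ l ∈ t, 0 ≤ f k l) :
    ∑ k ∈ s, ∑ l ∈ t, f k l = 0 ↔ ∀ k ∈ s, ∀ l ∈ t, f k l = 0 := by
  rw [sum_eq_zero_iff_of_nonneg fun k hk => sum_nonneg (hf k hk)]
  exact forall₂_congr fun k hk => sum_eq_zero_iff_of_nonneg (hf k hk)

lemma mul_eq_mul_of_weighted_sum_eq_zero {p w : α → β → ℝ} {s : Finset α} {t : Finset β}
    {i : α} {j : β} (hp : ∀ k l, 0 ≤ p k l) (hw : ∀ k ∈ s, ∀ l ∈ t, 0 < w k l)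
    (hcol : ∀ k ∈ s, ∀ k' ∈ s, ∀ l ∈ t, p k j * p k' l = p k l * p k' j)
    (hrow : ∀ k ∈ s, ∀ l ∈ t, ∀ l' ∈ t, p i l * p k l' = p i l' * p k l)
    (hsum : ∑ k ∈ s, ∑ l ∈ t, w k l * (p i j * p k l - p i l * p k j) = 0) :
    ∀ k ∈ s, ∀ l ∈ t, p i j * p k l = p i l * p k j := by
  set M : α → β → ℝ := fun k l => p i j * p k l - p i l * p k j with hM
  suffices ∀ k ∈ s, ∀ l ∈ t, M k l = 0 from fun k hk l hl => sub_eq_zero.1 (this k hk l hl)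
  have hwp : 0 ≤ ∑ k ∈ s, ∑ l ∈ t, w k l * p k l :=
    sum_nonneg fun k hk => sum_nonneg fun l hl => mul_nonneg (hw k hk l hl).le (hp k l)
  rcases hwp.eq_or_lt with hzero | hpos
  · -- `p` vanishes on `s ×ˢ t`, so every `M k l = - p i l * p k j` is nonpositive
    have hp0 := (sum_sum_eq_zero_iff_of_nonneg fun k hk l hl =>
      mul_nonneg (hw k hk l hl).le (hp k l)).1 hzero.symm
    have hM0 : ∀ k ∈ s, ∀ l ∈ t, w k l * M k l ≤ 0 := fun k hk l hl => by
      have : p k l = 0 := (mul_eq_zero.1 (hp0 k hk l hl)).resolve_left (hw k hk l hl).ne'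
      simp only [hM, this, mul_zero, zero_sub, mul_neg]
      exact neg_nonpos.2 (mul_nonneg (hw k hk l hl).le (mul_nonneg (hp i l) (hp k j)))
    have := (sum_sum_eq_zero_iff_of_nonneg fun k hk l hl => neg_nonneg.2 (hM0 k hk l hl)).1
      (by simpa only [sum_neg_distrib, neg_eq_zero] using hsum)
    intro k hk l hl
    exact (mul_eq_zero.1 (neg_eq_zero.1 (this k hk l hl))).resolve_left (hw k hk l hl).ne'
  · -- the minor relations make `M` proportional to `p` on `s ×ˢ t`
    intro k hk l hl
    have hprop : ∀ k' ∈ s, ∀ l' ∈ t, M k l * p k' l' = p k l * M k' l' := fun k' hk' l' hl' => by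
      simp only [hM]
      linear_combination -p k j * hrow k' hk' l hl l' hl' - p i l' * hcol k hk k' hk' l hl
    have : M k l * ∑ k ∈ s, ∑ l ∈ t, w k l * p k l = 0 := by
      calc M k l * ∑ k ∈ s, ∑ l ∈ t, w k l * p k l
          = p k l * ∑ k' ∈ s, ∑ l' ∈ t, w k' l' * M k' l' := by
            simp only [mul_sum]
            exact sum_congr rfl fun k' hk' => sum_congr rfl fun l' hl' => by
              linear_combination w k' l' * hprop k' hk' l' hl'
        _ = 0 := by rw [hsum, mul_zero]
    exact (mul_eq_zero.1 this).resolve_right hpos.ne'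

def CornerMinorsVanish [LT α] [LT β] (p : α → β → ℝ) (i : α) (j : β) : Prop :=
  ∀ k < i, ∀ l < j, p i j * p k l = p i l * p k j

lemma mul_eq_mul_of_cornerMinorsVanish [LinearOrder α] [LinearOrder β] {p : α → β → ℝ}
    {k k' : α} {l l' : β} (h : CornerMinorsVanish p (max k k') (max l l')) :
    p k l * p k' l' = p k l' * p k' l := by
  rcases lt_trichotomy k k' with hk | rfl | hk
  · rcases lt_trichotomy l l' with hl | rfl | hl
    · rw [max_eq_right hk.le, max_eq_right hl.le] at h
      linear_combination h k hk l hl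
    · ring
    · rw [max_eq_right hk.le, max_eq_left hl.le] at h
      linear_combination -h k hk l' hl
  · ring
  · rcases lt_trichotomy l l' with hl | rfl | hl
    · rw [max_eq_left hk.le, max_eq_right hl.le] at h
      linear_combination -h k' hk l hl
    · ring
    · rw [max_eq_left hk.le, max_eq_left hl.le] at h
      linear_combination h k' hk l' hl

lemma rectCov_eq_zero_of_lowerSets [Preorder α] [Preorder β] [LocallyFiniteOrderBot α]
    [LocallyFiniteOrderBot β] [PredOrder α] [PredOrder β] {p : α → β → ℝ} {a : α → ℝ} {b : β → ℝ}
    (h : ∀ i j, rectCov p a b (Finset.Iic i) (Finset.Iic j) = 0) {s : Finset α} {t : Finset β}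
    (hs : s = ∅ ∨ ∃ i, s = Finset.Iic i) (ht : t = ∅ ∨ ∃ j, t = Finset.Iic j) :
    rectCov p a b s t = 0 := by
  rcases hs with rfl | ⟨i, rfl⟩ <;> rcases ht with rfl | ⟨j, rfl⟩ <;>
    first | exact h i j | simp [rectCov]

lemma Finset.Iio_eq_empty_or_exists_eq_Iic [LinearOrder α] [LocallyFiniteOrderBot α]
    [PredOrder α] (i : α) : Finset.Iio i = ∅ ∨ ∃ k, Finset.Iio i = Finset.Iic k := by
  by_cases hi : IsMin i
  · exact Or.inl (Iio_eq_empty.2 hi)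
  · exact Or.inr ⟨Order.pred i, (Finset.Iic_pred_eq_Iio_of_not_isMin hi).symm⟩

section LowerRectangles

variable [LinearOrder α] [LinearOrder β] [LocallyFiniteOrderBot α] [LocallyFiniteOrderBot β]
  [PredOrder α] [PredOrder β] [WellFoundedLT α] [WellFoundedLT β]
  {p : α → β → ℝ} {a : α → ℝ} {b : β → ℝ}

theorem cornerMinorsVanish_of_rectCov_eq_zero (hp : ∀ k l, 0 ≤ p k l) (ha : StrictMono a)
    (hb : StrictMono b) (h : ∀ i j, rectCov p a b (Finset.Iic i) (Finset.Iic j) = 0) (i : α)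
    (j : β) : CornerMinorsVanish p i j := by
  induction i using WellFoundedLT.induction generalizing j with | _ i ihi
  induction j using WellFoundedLT.induction with | _ j ihj
  have hdiff := rectCov_insert_insert p a b (Finset.notMem_Iio_self (b := i))
    (Finset.notMem_Iio_self (b := j))
  simp only [Finset.Iio_insert] at hdiff
  have hi := Finset.Iio_eq_empty_or_exists_eq_Iic i
  have hj := Finset.Iio_eq_empty_or_exists_eq_Iic j
  rw [h, rectCov_eq_zero_of_lowerSets h hi (Or.inr ⟨j, rfl⟩),
    rectCov_eq_zero_of_lowerSets h (Or.inr ⟨i, rfl⟩) hj, rectCov_eq_zero_of_lowerSets h hi hj,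
    sub_self, sub_self, zero_add] at hdiff
  refine fun k hk l hl => mul_eq_mul_of_weighted_sum_eq_zero hp ?_ ?_ ?_ hdiff.symm k
    (mem_Iio.2 hk) l (mem_Iio.2 hl)
  · intro k hk l hl
    exact mul_pos (sub_pos.2 (ha (mem_Iio.1 hk))) (sub_pos.2 (hb (mem_Iio.1 hl)))
  · intro k hk k' hk' l hl
    refine mul_eq_mul_of_cornerMinorsVanish ?_
    rw [max_eq_left (mem_Iio.1 hl).le]
    exact ihi _ (max_lt (mem_Iio.1 hk) (mem_Iio.1 hk')) j
  · intro k hk l hl l' hl'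
    refine mul_eq_mul_of_cornerMinorsVanish ?_
    rw [max_eq_left (mem_Iio.1 hk).le]
    exact ihj _ (max_lt (mem_Iio.1 hl) (mem_Iio.1 hl'))

theorem sum_sum_mul_eq_mul_of_rectCov_eq_zero [Fintype α] [Fintype β]
    (hp : ∀ k l, 0 ≤ p k l) (ha : StrictMono a) (hb : StrictMono b)
    (h : ∀ i j, rectCov p a b (Finset.Iic i) (Finset.Iic j) = 0) (k : α) (l : β) :
    (∑ k', ∑ l', p k' l') * p k l = (∑ l', p k l') * ∑ k', p k' l := by
  have hminor (x : α) (y : β) : p x y * p k l = p k y * p x l := by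
    linear_combination mul_eq_mul_of_cornerMinorsVanish (k := k) (k' := x) (l := l) (l' := y)
      (cornerMinorsVanish_of_rectCov_eq_zero hp ha hb h _ _)
  calc (∑ x, ∑ y, p x y) * p k l = ∑ x, ∑ y, p k y * p x l := by
        simp only [sum_mul, hminor]
    _ = (∑ y, p k y) * ∑ x, p x l := by rw [sum_mul_sum, sum_comm]

end LowerRectangles

end Covariance

section Probability

open Finset ProbabilityTheory

variable {Ω ι κ γ : Type*} [MeasurableSpace Ω] {P : Measure Ω}

lemma exists_measurable_comp_eq [MeasurableSpace γ] [MeasurableSingletonClass γ]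
    [MeasurableSpace ι] [Countable ι] {X : Ω → γ} (hX : Measurable X) {a : ι → γ}
    (ha : Function.Injective a) (hXval : ∀ ω, ∃ i, X ω = a i) :
    ∃ I : Ω → ι, Measurable I ∧ X = a ∘ I := by
  choose I hI using hXval
  refine ⟨I, measurable_to_countable' fun k => ?_, funext hI⟩
  have : I ⁻¹' {k} = X ⁻¹' {a k} := by ext ω; simp [hI ω, ha.eq_iff]
  exact this ▸ hX (measurableSet_singleton _)

lemma setIntegral_preimage_inter_preimage_mul [MeasurableSpace ι] [MeasurableSpace κ]
    {I : Ω → ι} {J : Ω → κ} (hIJ : IndepFun I J P) (hI : Measurable I) (hJ : Measurable J)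
    {A : Set ι} {B : Set κ} (hA : MeasurableSet A) (hB : MeasurableSet B) {f : ι → ℝ}
    {g : κ → ℝ} (hf : Measurable f) (hg : Measurable g) :
    ∫ ω in I ⁻¹' A ∩ J ⁻¹' B, f (I ω) * g (J ω) ∂P
      = (∫ ω in I ⁻¹' A, f (I ω) ∂P) * ∫ ω in J ⁻¹' B, g (J ω) ∂P := by
  rw [← integral_indicator ((hI hA).inter (hJ hB)), ← integral_indicator (hI hA),
    ← integral_indicator (hJ hB)]
  simp only [inter_indicator_mul]
  exact (hIJ.comp (hf.indicator hA) (hg.indicator hB)).integral_fun_mul_eq_mul_integral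
    ((hf.indicator hA).comp hI).aestronglyMeasurable
    ((hg.indicator hB).comp hJ).aestronglyMeasurable

lemma cexp_mul_eq_of_indepFun {X Y : Ω → ℝ} (hXY : IndepFun X Y P) (hX : Measurable X)
    (hY : Measurable Y) {A B : Set ℝ} (hA : MeasurableSet A) (hB : MeasurableSet B) :
    cexp P (X ⁻¹' A ∩ Y ⁻¹' B) (fun ω => X ω * Y ω)
      = cexp P (X ⁻¹' A ∩ Y ⁻¹' B) X * cexp P (X ⁻¹' A ∩ Y ⁻¹' B) Y := by
  have hfactor (f g : ℝ → ℝ) (hf : Measurable f) (hg : Measurable g) :=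
    setIntegral_preimage_inter_preimage_mul hXY hX hY hA hB hf hg (P := P)
  have hXY' := hfactor id id measurable_id measurable_id
  have hX' := hfactor id 1 measurable_id measurable_const
  have hY' := hfactor 1 id measurable_const measurable_id
  have hU := hfactor 1 1 measurable_const measurable_const
  simp only [id, Pi.one_apply, mul_one, one_mul, setIntegral_const, smul_eq_mul] at hXY' hX' hY' hU
  simp only [cexp, ← measureReal_def, hXY', hX', hY', hU]
  -- if a factor is null, both sides are `0` since `x / 0 = 0`
  rcases eq_or_ne (P.real (X ⁻¹' A)) 0 with hA₀ | hA₀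
  · simp [hA₀]
  rcases eq_or_ne (P.real (Y ⁻¹' B)) 0 with hB₀ | hB₀
  · simp [hB₀]
  field_simp

def jointMass (P : Measure Ω) (I : Ω → ι) (J : Ω → κ) (k : ι) (l : κ) : ℝ :=
  P.real {ω | I ω = k ∧ J ω = l}

lemma jointMass_nonneg (I : Ω → ι) (J : Ω → κ) (k : ι) (l : κ) : 0 ≤ jointMass P I J k l :=
  measureReal_nonneg

section Discrete

variable [Fintype ι] [Fintype κ] [MeasurableSpace ι] [MeasurableSpace κ]
  [MeasurableSingletonClass ι] [MeasurableSingletonClass κ] {I : Ω → ι} {J : Ω → κ}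

lemma integral_comp_eq_sum_jointMass [IsFiniteMeasure P] (hI : Measurable I) (hJ : Measurable J)
    (g : ι → κ → ℝ) :
    ∫ ω, g (I ω) (J ω) ∂P = ∑ k, ∑ l, g k l * jointMass P I J k l := by
  have hIJ : Measurable fun ω => (I ω, J ω) := hI.prodMk hJ
  rw [← integral_map hIJ.aemeasurable (f := fun x => g x.1 x.2)
    (measurable_of_countable _).aestronglyMeasurable, integral_fintype .of_finite,
    Fintype.sum_prod_type]
  refine sum_congr rfl fun k _ => sum_congr rfl fun l _ => ?_
  rw [map_measureReal_apply hIJ (measurableSet_singleton _), smul_eq_mul, mul_comm]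
  congr 2
  ext ω
  simp

lemma setIntegral_Iic_eq_sum_jointMass [LinearOrder ι] [LinearOrder κ]
    [LocallyFiniteOrderBot ι] [LocallyFiniteOrderBot κ] [IsFiniteMeasure P]
    (hI : Measurable I) (hJ : Measurable J) (g : ι → κ → ℝ) (i : ι) (j : κ) :
    ∫ ω in {ω | I ω ≤ i ∧ J ω ≤ j}, g (I ω) (J ω) ∂P
      = ∑ k ∈ Finset.Iic i, ∑ l ∈ Finset.Iic j, g k l * jointMass P I J k l := by
  have hU : MeasurableSet {ω | I ω ≤ i ∧ J ω ≤ j} :=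
    hI.prodMk hJ (toFinite {x : ι × κ | x.1 ≤ i ∧ x.2 ≤ j}).measurableSet
  rw [← integral_indicator hU]
  have : {ω | I ω ≤ i ∧ J ω ≤ j}.indicator (fun ω => g (I ω) (J ω))
      = fun ω => (if I ω ≤ i ∧ J ω ≤ j then g (I ω) (J ω) else 0) := by
    ext ω; simp [indicator_apply]
  rw [this, integral_comp_eq_sum_jointMass hI hJ (fun k l => if k ≤ i ∧ l ≤ j then g k l else 0)]
  simp only [← Finset.filter_ge_eq_Iic, Finset.sum_filter, ite_and, ite_mul, zero_mul]
  exact sum_congr rfl fun k _ => by split_ifs <;> simp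

lemma sum_jointMass_right [IsFiniteMeasure P] (hI : Measurable I) (hJ : Measurable J) (k : ι) :
    ∑ l, jointMass P I J k l = P.real {ω | I ω = k} := by
  classical
  calc ∑ l, jointMass P I J k l = ∫ ω, if I ω = k then 1 else 0 ∂P := by
        rw [integral_comp_eq_sum_jointMass hI hJ fun k' _ => if k' = k then 1 else 0]
        simp
    _ = P.real (I ⁻¹' {k}) := by
        rw [← integral_indicator_one (hI (measurableSet_singleton k))]
        congr 1 with ω

lemma sum_jointMass_left [IsFiniteMeasure P] (hI : Measurable I) (hJ : Measurable J) (l : κ) :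
    ∑ k, jointMass P I J k l = P.real {ω | J ω = l} := by
  classical
  calc ∑ k, jointMass P I J k l = ∫ ω, if J ω = l then 1 else 0 ∂P := by
        rw [integral_comp_eq_sum_jointMass hI hJ fun _ l' => if l' = l then 1 else 0]
        simp
    _ = P.real (J ⁻¹' {l}) := by
        rw [← integral_indicator_one (hJ (measurableSet_singleton l))]
        congr 1 with ω

lemma sum_sum_jointMass [IsProbabilityMeasure P] (hI : Measurable I) (hJ : Measurable J) :
    ∑ k, ∑ l, jointMass P I J k l = 1 := by
  simpa using (integral_comp_eq_sum_jointMass hI hJ (P := P) fun _ _ => (1 : ℝ)).symm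

lemma indepFun_of_jointMass_eq_mul [IsFiniteMeasure P] (hI : Measurable I) (hJ : Measurable J)
    (h : ∀ k l, jointMass P I J k l = P.real {ω | I ω = k} * P.real {ω | J ω = l}) :
    IndepFun I J P := by
  rw [indepFun_iff_map_prod_eq_prod_map_map hI.aemeasurable hJ.aemeasurable]
  refine ext_iff_measureReal_singleton.2 fun ⟨k, l⟩ => ?_
  rw [← singleton_prod_singleton, measureReal_prod_prod,
    map_measureReal_apply (hI.prodMk hJ) ((measurableSet_singleton k).prod
      (measurableSet_singleton l)),
    map_measureReal_apply hI (measurableSet_singleton k),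
    map_measureReal_apply hJ (measurableSet_singleton l)]
  exact h k l

lemma rectCov_jointMass_eq_zero [LinearOrder ι] [LinearOrder κ] [LocallyFiniteOrderBot ι]
    [LocallyFiniteOrderBot κ] [IsFiniteMeasure P] (hI : Measurable I) (hJ : Measurable J)
    {a : ι → ℝ} {b : κ → ℝ} {i : ι} {j : κ} (hU : P {ω | I ω ≤ i ∧ J ω ≤ j} ≠ 0)
    (h : cexp P {ω | I ω ≤ i ∧ J ω ≤ j} (fun ω => a (I ω) * b (J ω))
      = cexp P {ω | I ω ≤ i ∧ J ω ≤ j} (fun ω => a (I ω))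
        * cexp P {ω | I ω ≤ i ∧ J ω ≤ j} (fun ω => b (J ω))) :
    rectCov (jointMass P I J) a b (Finset.Iic i) (Finset.Iic j) = 0 := by
  have hU' : P.real {ω | I ω ≤ i ∧ J ω ≤ j} ≠ 0 :=
    (ENNReal.toReal_pos hU (measure_ne_top P _)).ne'
  have hsum (g : ι → κ → ℝ) := setIntegral_Iic_eq_sum_jointMass hI hJ (P := P) g i j
  have hab := hsum fun k l => a k * b l
  have ha := hsum fun k _ => a k
  have hb := hsum fun _ l => b l
  have hmass := hsum fun _ _ => 1
  simp only [setIntegral_const, smul_eq_mul, mul_one, one_mul] at hab ha hb hmass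
  rw [hmass] at hU'
  simp only [cexp, ← measureReal_def, hab, ha, hb, hmass] at h
  field_simp at h
  rw [rectCov]
  linear_combination h

end Discrete

end Probability

theorem stmt_14 {Ω : Type*} [MeasurableSpace Ω] (P : Measure Ω) [IsProbabilityMeasure P]
    (X Y : Ω → ℝ) (hX : Measurable X) (hY : Measurable Y)
    {n m : ℕ} (a : Fin n → ℝ) (b : Fin m → ℝ) (ha : StrictMono a) (hb : StrictMono b)
    (hXval : ∀ ω, ∃ i, X ω = a i) (hXpos : ∀ i, 0 < P {ω | X ω = a i})
    (hYval : ∀ ω, ∃ j, Y ω = b j) (hYpos : ∀ j, 0 < P {ω | Y ω = b j}) :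
    (∀ A B : Set ℝ, MeasurableSet A → MeasurableSet B →
      P ({ω | X ω ∈ A} ∩ {ω | Y ω ∈ B}) = P {ω | X ω ∈ A} * P {ω | Y ω ∈ B}) ↔
    ∀ i : Fin n, ∀ j : Fin m,
      0 < P {ω | X ω ≤ a i ∧ Y ω ≤ b j} ∧
      cexp P {ω | X ω ≤ a i ∧ Y ω ≤ b j} (fun ω => X ω * Y ω)
        = cexp P {ω | X ω ≤ a i ∧ Y ω ≤ b j} X
          * cexp P {ω | X ω ≤ a i ∧ Y ω ≤ b j} Y := by
  constructor
  · intro h i j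
    have hXY : ProbabilityTheory.IndepFun X Y P :=
      ProbabilityTheory.indepFun_iff_measure_inter_preimage_eq_mul.2 h
    refine ⟨?_, cexp_mul_eq_of_indepFun hXY hX hY measurableSet_Iic measurableSet_Iic⟩
    rw [show {ω | X ω ≤ a i ∧ Y ω ≤ b j} = {ω | X ω ∈ Iic (a i)} ∩ {ω | Y ω ∈ Iic (b j)} from rfl,
      h _ _ measurableSet_Iic measurableSet_Iic]
    exact ENNReal.mul_pos ((hXpos i).trans_le (measure_mono fun ω hω => le_of_eq hω)).ne'
      ((hYpos j).trans_le (measure_mono fun ω hω => le_of_eq hω)).ne'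
  · intro h
    obtain ⟨I, hI, rfl⟩ := exists_measurable_comp_eq hX ha.injective hXval
    obtain ⟨J, hJ, rfl⟩ := exists_measurable_comp_eq hY hb.injective hYval
    have hcov (i : Fin n) (j : Fin m) :
        rectCov (jointMass P I J) a b (Finset.Iic i) (Finset.Iic j) = 0 := by
      have hU : {ω | (a ∘ I) ω ≤ a i ∧ (b ∘ J) ω ≤ b j} = {ω | I ω ≤ i ∧ J ω ≤ j} := by
        simp only [Function.comp_apply, ha.le_iff_le, hb.le_iff_le]
      obtain ⟨hpos, hcexp⟩ := h i j
      rw [hU] at hpos hcexp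
      exact rectCov_jointMass_eq_zero hI hJ hpos.ne' hcexp
    have hIJ : ProbabilityTheory.IndepFun I J P := indepFun_of_jointMass_eq_mul hI hJ fun k l => by
      have := sum_sum_mul_eq_mul_of_rectCov_eq_zero (jointMass_nonneg I J) ha hb hcov k l
      rwa [sum_sum_jointMass hI hJ, one_mul, sum_jointMass_right hI hJ,
        sum_jointMass_left hI hJ] at this
    exact (hIJ.comp (measurable_of_finite a) (measurable_of_finite b)).measure_inter_preimage_eq_mul
end

section
/- Let X be a random variable taking exactly two values a₁ < a₂, each with positive probability, and let Y be an integrable real-valued random variable (E|Y| < ∞). Then X and Y are stochastically independent if and only if for every t ∈ ℝ with ℙ(Y ≤ t) > 0, one has E[XY | Y ≤ t] = E[X | Y ≤ t] · E[Y | Y ≤ t]. -/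
open MeasureTheory Set

/-!
Write `A = {X = a₂}`, so that `X = a₁ + (a₂ - a₁)·1_A`, and let `ν` and `μ` be the laws of `Y`
under `ℙ(· ∩ A)` and `ℙ`. Independence means `ν = ℙ(A)·μ`. The conditional identity at `t` says
`ν[y; y ≤ t]·μ(y ≤ t) = ν(y ≤ t)·μ[y; y ≤ t]`. In terms of `Φ_ρ(t) = ∫ (t - y)⁺ dρ`, whose right
derivative is `ρ(y ≤ t)`, this is the Wronskian identity `Φ_ν Φ_μ' = Φ_ν' Φ_μ`, so `Φ_ν / Φ_μ` is
constant, and differentiating `Φ_ν = c Φ_μ` gives `ν = c μ` on half-lines, hence everywhere.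
-/

open ProbabilityTheory Filter Topology
open scoped ENNReal

noncomputable def lowerPartialMoment (β : Measure ℝ) (t : ℝ) : ℝ :=
  ∫ x, max (t - x) 0 ∂β

namespace lowerPartialMoment

variable {β : Measure ℝ}

theorem nonneg (t : ℝ) : 0 ≤ lowerPartialMoment β t :=
  integral_nonneg fun _ => le_max_right _ _

variable [IsFiniteMeasure β]

theorem integrable_integrand (hβ : Integrable id β) (t : ℝ) :
    Integrable (fun x => max (t - x) 0) β :=
  ((integrable_const t).sub hβ).pos_part

theorem eq_sub_setIntegral (hβ : Integrable id β) (t : ℝ) :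
    lowerPartialMoment β t = t * β.real (Iic t) - ∫ x in Iic t, x ∂β := by
  have hind : (fun x => max (t - x) 0) = (Iic t).indicator (fun x => t - x) := by
    funext x
    by_cases hx : x ≤ t
    · simp [hx]
    · simp [hx, (not_le.1 hx).le]
  rw [lowerPartialMoment, hind, integral_indicator measurableSet_Iic,
    integral_sub (integrable_const t).integrableOn (g := fun x => x) hβ.integrableOn,
    setIntegral_const, smul_eq_mul, mul_comm]

theorem monotone (hβ : Integrable id β) : Monotone (lowerPartialMoment β) := fun s t hst =>
  integral_mono (integrable_integrand hβ s) (integrable_integrand hβ t) fun x => by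
    dsimp only; gcongr

theorem mono_measure {α : Measure ℝ} (hαβ : α ≤ β) (hβ : Integrable id β) (t : ℝ) :
    lowerPartialMoment α t ≤ lowerPartialMoment β t :=
  integral_mono_measure hαβ (Eventually.of_forall fun _ => le_max_right _ _)
    (integrable_integrand hβ t)

theorem continuous (hβ : Integrable id β) : Continuous (lowerPartialMoment β) := by
  refine (LipschitzWith.of_dist_le' (K := β.real univ) fun s t => ?_).continuous
  calc dist (lowerPartialMoment β s) (lowerPartialMoment β t)
      = ‖∫ x, (max (s - x) 0 - max (t - x) 0) ∂β‖ := by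
        rw [dist_eq_norm, lowerPartialMoment, lowerPartialMoment,
          integral_sub (integrable_integrand hβ s) (integrable_integrand hβ t)]
    _ ≤ |s - t| * β.real univ := norm_integral_le_of_norm_le_const <|
        Eventually.of_forall fun x => by
          simpa only [Real.norm_eq_abs, sub_sub_sub_cancel_right] using
            abs_max_sub_max_le_abs (s - x) (t - x) 0
    _ = β.real univ * dist s t := by rw [Real.dist_eq, mul_comm]

theorem hasDerivWithinAt_Ici (hβ : Integrable id β) (t : ℝ) :
    HasDerivWithinAt (lowerPartialMoment β) (β.real (Iic t)) (Ici t) t := by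
  rw [← hasDerivWithinAt_Ioi_iff_Ici, hasDerivWithinAt_iff_tendsto_slope' self_notMem_Ioi,
    ← integral_indicator_one measurableSet_Iic]
  have hslope : slope (lowerPartialMoment β) t
      = fun s => ∫ x, (s - t)⁻¹ * (max (s - x) 0 - max (t - x) 0) ∂β := funext fun s => by
    rw [slope, lowerPartialMoment, lowerPartialMoment, vsub_eq_sub, smul_eq_mul, integral_const_mul,
      integral_sub (integrable_integrand hβ s) (integrable_integrand hβ t)]
  rw [hslope]
  refine tendsto_integral_filter_of_dominated_convergence (fun _ => 1)
    (Eventually.of_forall fun s => by fun_prop) ?_ (integrable_const 1) ?_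
  · filter_upwards [self_mem_nhdsWithin] with s (hs : t < s)
    refine Eventually.of_forall fun x => ?_
    rw [norm_mul, norm_inv, Real.norm_eq_abs, Real.norm_eq_abs, abs_of_pos (sub_pos.2 hs)]
    exact inv_mul_le_one_of_le₀ ((abs_max_sub_max_le_abs _ _ _).trans_eq (by
      rw [sub_sub_sub_cancel_right, abs_of_pos (sub_pos.2 hs)])) (sub_pos.2 hs).le
  · refine Eventually.of_forall fun x => tendsto_const_nhds.congr' ?_
    rcases le_or_gt x t with hx | hx
    · filter_upwards [self_mem_nhdsWithin] with s (hs : t < s)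
      rw [indicator_of_mem (mem_Iic.2 hx), max_eq_left (by linarith), max_eq_left (by linarith),
        sub_sub_sub_cancel_right, inv_mul_cancel₀ (sub_pos.2 hs).ne', Pi.one_apply]
    · filter_upwards [Ioo_mem_nhdsGT hx] with s hs
      rw [indicator_of_notMem (notMem_Iic.2 hx), max_eq_right (by linarith [hs.2]),
        max_eq_right (by linarith), sub_zero, mul_zero]

end lowerPartialMoment

theorem div_eq_div_of_hasDerivWithinAt_Ici {f g f' g' : ℝ → ℝ} {a b : ℝ} (hab : a ≤ b)
    (hf : ContinuousOn f (Icc a b)) (hg : ContinuousOn g (Icc a b))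
    (hf' : ∀ x ∈ Ico a b, HasDerivWithinAt f (f' x) (Ici x) x)
    (hg' : ∀ x ∈ Ico a b, HasDerivWithinAt g (g' x) (Ici x) x)
    (hg0 : ∀ x ∈ Icc a b, g x ≠ 0) (hW : ∀ x ∈ Ico a b, f x * g' x = f' x * g x) :
    f b / g b = f a / g a := by
  refine constant_of_has_deriv_right_zero (hf.div hg hg0) (fun x hx => ?_) b ⟨hab, le_rfl⟩
  have := (hf' x hx).div (hg' x hx) (hg0 x (Ico_subset_Icc_self hx))
  rwa [hW x hx, sub_self, zero_div] at this

theorem exists_eq_const_mul_of_hasDerivWithinAt_Ici {f g f' g' : ℝ → ℝ}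
    (hf : Continuous f) (hg : Continuous g)
    (hf' : ∀ x, HasDerivWithinAt f (f' x) (Ici x) x)
    (hg' : ∀ x, HasDerivWithinAt g (g' x) (Ici x) x)
    (hg_mono : Monotone g) (hf_nonneg : ∀ x, 0 ≤ f x) (hfg : ∀ x, f x ≤ g x)
    (hW : ∀ x, 0 < g x → f x * g' x = f' x * g x) :
    ∃ c, 0 ≤ c ∧ ∀ x, f x = c * g x := by
  by_cases hpos : ∃ x₀, 0 < g x₀
  swap
  · simp only [not_exists, not_lt] at hpos
    exact ⟨0, le_rfl, fun x => by linarith [hf_nonneg x, hfg x, hpos x]⟩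
  obtain ⟨x₀, hx₀⟩ := hpos
  have hratio : ∀ a b, a ≤ b → 0 < g a → f b / g b = f a / g a := fun a b hab ha => by
    have hg_pos : ∀ x ∈ Icc a b, 0 < g x := fun x hx => ha.trans_le (hg_mono hx.1)
    exact div_eq_div_of_hasDerivWithinAt_Ici hab hf.continuousOn hg.continuousOn
      (fun x _ => hf' x) (fun x _ => hg' x) (fun x hx => (hg_pos x hx).ne')
      (fun x hx => hW x (hg_pos x (Ico_subset_Icc_self hx)))
  refine ⟨f x₀ / g x₀, div_nonneg (hf_nonneg x₀) hx₀.le, fun x => ?_⟩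
  rcases (hf_nonneg x).trans (hfg x) |>.eq_or_lt with hx | hx
  · rw [← hx, mul_zero]
    exact le_antisymm (hx ▸ hfg x) (hf_nonneg x)
  · have : f x / g x = f x₀ / g x₀ := by
      rcases le_total x x₀ with h | h
      · exact (hratio x x₀ h hx).symm
      · exact hratio x₀ x h hx₀
    rw [← this, div_mul_cancel₀ _ hx.ne']

theorem MeasureTheory.Measure.exists_eq_smul_of_setIntegral_Iic_mul_eq {α β : Measure ℝ}
    [IsFiniteMeasure β] (hαβ : α ≤ β) (hβ : Integrable id β)
    (h : ∀ t, 0 < β (Iic t) →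
      (∫ x in Iic t, x ∂α) * β.real (Iic t) = α.real (Iic t) * ∫ x in Iic t, x ∂β) :
    ∃ c : ℝ≥0∞, α = c • β := by
  have : IsFiniteMeasure α := isFiniteMeasure_of_le β hαβ
  have hα : Integrable id α := hβ.mono_measure hαβ
  have hW : ∀ t, 0 < lowerPartialMoment β t → lowerPartialMoment α t * β.real (Iic t)
      = α.real (Iic t) * lowerPartialMoment β t := fun t ht => by
    have hβt : 0 < β (Iic t) := by
      refine pos_iff_ne_zero.2 fun h0 => ht.ne' ?_
      rw [lowerPartialMoment.eq_sub_setIntegral hβ, Measure.restrict_eq_zero.2 h0,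
        measureReal_def, h0]
      simp
    rw [lowerPartialMoment.eq_sub_setIntegral hα, lowerPartialMoment.eq_sub_setIntegral hβ]
    linear_combination -h t hβt
  obtain ⟨c, hc, hαc⟩ := exists_eq_const_mul_of_hasDerivWithinAt_Ici
    (lowerPartialMoment.continuous hα) (lowerPartialMoment.continuous hβ)
    (lowerPartialMoment.hasDerivWithinAt_Ici hα) (lowerPartialMoment.hasDerivWithinAt_Ici hβ)
    (lowerPartialMoment.monotone hβ) lowerPartialMoment.nonneg
    (lowerPartialMoment.mono_measure hαβ hβ) hW
  have hcdf : ∀ t, α.real (Iic t) = c * β.real (Iic t) := fun t => by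
    refine (uniqueDiffOn_Ici t t self_mem_Ici).eq_deriv _
      (lowerPartialMoment.hasDerivWithinAt_Ici hα t) ?_
    rw [show lowerPartialMoment α = fun s => c * lowerPartialMoment β s from funext hαc]
    exact (lowerPartialMoment.hasDerivWithinAt_Ici hβ t).const_mul c
  refine ⟨ENNReal.ofReal c, ext_of_Iic _ _ fun t => ?_⟩
  rw [Measure.smul_apply, smul_eq_mul, ← ofReal_measureReal, hcdf, ENNReal.ofReal_mul hc,
    ofReal_measureReal]

section Probability

open MeasurableSpace

variable {Ω : Type*} [MeasurableSpace Ω] {P : Measure Ω}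

theorem ProbabilityTheory.IndepFun.setIntegral_preimage_mul {X Y : Ω → ℝ} (hXY : IndepFun X Y P)
    (hX : AEStronglyMeasurable X P) (hY : Measurable Y) {g : ℝ → ℝ} (hg : Measurable g)
    {B : Set ℝ} (hB : MeasurableSet B) :
    ∫ ω in Y ⁻¹' B, X ω * g (Y ω) ∂P = (∫ ω, X ω ∂P) * ∫ ω in Y ⁻¹' B, g (Y ω) ∂P := by
  have hgB : Measurable (B.indicator g) := hg.indicator hB
  have hprod : (Y ⁻¹' B).indicator (fun ω => X ω * g (Y ω)) = X * (B.indicator g ∘ Y) := by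
    ext ω
    by_cases hω : Y ω ∈ B <;> simp [hω]
  have hind : IndepFun X (B.indicator g ∘ Y) P := hXY.comp measurable_id hgB
  rw [← integral_indicator (hY hB), ← integral_indicator (hY hB), hprod,
    hind.integral_mul_eq_mul_integral hX (hgB.comp hY).aestronglyMeasurable]
  rfl

theorem ProbabilityTheory.IndepFun.cexp_mul_preimage {X Y : Ω → ℝ} (hXY : IndepFun X Y P)
    (hX : AEStronglyMeasurable X P) (hY : Measurable Y) {B : Set ℝ} (hB : MeasurableSet B) :
    cexp P (Y ⁻¹' B) (fun ω => X ω * Y ω) = cexp P (Y ⁻¹' B) X * cexp P (Y ⁻¹' B) Y := by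
  have hmulY := hXY.setIntegral_preimage_mul hX hY measurable_id hB
  have hmul1 := hXY.setIntegral_preimage_mul hX hY (measurable_const (a := (1 : ℝ))) hB
  simp only [id, mul_one, setIntegral_const, smul_eq_mul] at hmulY hmul1
  rw [cexp, cexp, cexp, hmulY, hmul1, measureReal_def]
  rcases eq_or_ne (P (Y ⁻¹' B)).toReal 0 with h | h
  · simp [h]
  · field_simp

theorem setIntegral_affine_indicator_mul {A : Set Ω} (hA : MeasurableSet A) {Z : Ω → ℝ}
    (hZ : Integrable Z P) (U : Set Ω) (a₁ a₂ : ℝ) :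
    ∫ ω in U, (a₁ + (a₂ - a₁) * A.indicator 1 ω) * Z ω ∂P
      = a₁ * ∫ ω in U, Z ω ∂P + (a₂ - a₁) * ∫ ω in U, Z ω ∂P.restrict A := by
  have hsplit : ∀ ω, (a₁ + (a₂ - a₁) * A.indicator 1 ω) * Z ω
      = a₁ * Z ω + (a₂ - a₁) * A.indicator Z ω := fun ω => by
    by_cases hω : ω ∈ A <;> simp [hω]
    ring
  simp_rw [hsplit]
  rw [integral_add (hZ.integrableOn.const_mul _) ((hZ.indicator hA).integrableOn.const_mul _),
    integral_const_mul, integral_const_mul, integral_indicator hA, Measure.restrict_comm hA]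

theorem setIntegral_mul_measureReal_eq_of_cexp_mul_eq [IsFiniteMeasure P] {X Y : Ω → ℝ}
    {A U : Set Ω} {a₁ a₂ : ℝ} (hab : a₁ ≠ a₂) (hA : MeasurableSet A)
    (hXA : ∀ ω, X ω = a₁ + (a₂ - a₁) * A.indicator 1 ω) (hY : Integrable Y P) (hPU : P U ≠ 0)
    (h : cexp P U (fun ω => X ω * Y ω) = cexp P U X * cexp P U Y) :
    (∫ ω in U, Y ω ∂P.restrict A) * P.real U = (P.restrict A).real U * ∫ ω in U, Y ω ∂P := by
  have hXY := setIntegral_affine_indicator_mul hA hY U a₁ a₂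
  have hX := setIntegral_affine_indicator_mul hA (integrable_const (μ := P) (1 : ℝ)) U a₁ a₂
  simp only [mul_one, setIntegral_const, smul_eq_mul] at hX
  have hPU' : P.real U ≠ 0 := (measureReal_ne_zero_iff (measure_ne_top P U)).2 hPU
  simp only [cexp, hXA, ← measureReal_def] at h
  rw [hXY, hX] at h
  field_simp at h
  exact mul_left_cancel₀ (sub_ne_zero.2 hab.symm) (by linear_combination h)

theorem exists_map_restrict_eq_smul_of_cexp_mul_eq [IsFiniteMeasure P] {X Y : Ω → ℝ}
    (hY : Measurable Y) (hYint : Integrable Y P) {A : Set Ω} {a₁ a₂ : ℝ} (hab : a₁ ≠ a₂)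
    (hA : MeasurableSet A) (hXA : ∀ ω, X ω = a₁ + (a₂ - a₁) * A.indicator 1 ω)
    (h : ∀ t : ℝ, 0 < P {ω | Y ω ≤ t} →
      cexp P {ω | Y ω ≤ t} (fun ω => X ω * Y ω)
        = cexp P {ω | Y ω ≤ t} X * cexp P {ω | Y ω ≤ t} Y) :
    ∃ c : ℝ≥0∞, (P.restrict A).map Y = c • P.map Y := by
  refine Measure.exists_eq_smul_of_setIntegral_Iic_mul_eq (β := P.map Y)
    (Measure.map_mono Measure.restrict_le_self hY)
    ((integrable_map_measure aestronglyMeasurable_id hY.aemeasurable).2 hYint) fun t ht => ?_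
  rw [Measure.map_apply hY measurableSet_Iic] at ht
  have := setIntegral_mul_measureReal_eq_of_cexp_mul_eq hab hA hXA hYint ht.ne' (h t ht)
  rwa [setIntegral_map (f := fun x => x) measurableSet_Iic aestronglyMeasurable_id hY.aemeasurable,
    setIntegral_map (f := fun x => x) measurableSet_Iic aestronglyMeasurable_id hY.aemeasurable,
    map_measureReal_apply hY measurableSet_Iic, map_measureReal_apply hY measurableSet_Iic]

theorem indepFun_indicator_of_map_restrict_eq_smul [IsProbabilityMeasure P] {A : Set Ω}
    {Y : Ω → ℝ} (hA : MeasurableSet A) (hY : Measurable Y) {c : ℝ≥0∞}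
    (h : (P.restrict A).map Y = c • P.map Y) :
    IndepFun (A.indicator fun _ => (1 : ℝ)) Y P := by
  have hmul : ∀ B, MeasurableSet B → P (Y ⁻¹' B ∩ A) = c * P (Y ⁻¹' B) := fun B hB => by
    simpa [Measure.map_apply hY hB, Measure.restrict_apply (hY hB)] using congrArg (· B) h
  have hc : c = P A := by simpa using (hmul univ MeasurableSet.univ).symm
  refine Indep.indicator_indepFun 1 (measurableSet_generateFrom (mem_singleton A)) <|
    IndepSets.indep (generateFrom_le fun s hs => (mem_singleton_iff.1 hs) ▸ hA)
      hY.comap_le (IsPiSystem.singleton A) (@isPiSystem_measurableSet _ (.comap Y _))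
      rfl (@generateFrom_measurableSet _ (.comap Y _)).symm ?_
  rw [IndepSets_iff]
  rintro s _ rfl ⟨B, hB, rfl⟩
  rw [inter_comm, hmul B hB, hc]

end Probability

theorem stmt_15_general {Ω : Type*} [MeasurableSpace Ω] (P : Measure Ω) [IsProbabilityMeasure P]
    (X Y : Ω → ℝ) (hX : Measurable X) (hY : Measurable Y)
    (a₁ a₂ : ℝ) (ha : a₁ < a₂)
    (hXval : ∀ ω, X ω = a₁ ∨ X ω = a₂)
    (hYint : Integrable Y P) :
    (∀ A B : Set ℝ, MeasurableSet A → MeasurableSet B →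
      P ({ω | X ω ∈ A} ∩ {ω | Y ω ∈ B}) = P {ω | X ω ∈ A} * P {ω | Y ω ∈ B}) ↔
    ∀ t : ℝ, 0 < P {ω | Y ω ≤ t} →
      cexp P {ω | Y ω ≤ t} (fun ω => X ω * Y ω)
        = cexp P {ω | Y ω ≤ t} X * cexp P {ω | Y ω ≤ t} Y := by
  set A := {ω | X ω = a₂}
  have hA : MeasurableSet A := hX (measurableSet_singleton a₂)
  have hXA : ∀ ω, X ω = a₁ + (a₂ - a₁) * A.indicator 1 ω := fun ω => by
    by_cases hω : X ω = a₂
    · rw [indicator_of_mem (show ω ∈ A from hω), Pi.one_apply, hω]; ring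
    · rw [indicator_of_notMem (show ω ∉ A from hω), (hXval ω).resolve_right hω]; ring
  refine (indepFun_iff_measure_inter_preimage_eq_mul (f := X) (g := Y)).symm.trans ⟨fun hXY t _ =>
    hXY.cexp_mul_preimage hX.aestronglyMeasurable hY measurableSet_Iic, fun h => ?_⟩
  obtain ⟨c, hc⟩ := exists_map_restrict_eq_smul_of_cexp_mul_eq hY hYint ha.ne hA hXA h
  rw [show X = (fun z => a₁ + (a₂ - a₁) * z) ∘ A.indicator fun _ => 1 from funext hXA]
  exact (indepFun_indicator_of_map_restrict_eq_smul hA hY hc).comp (by fun_prop) measurable_id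

theorem stmt_15 {Ω : Type*} [MeasurableSpace Ω] (P : Measure Ω) [IsProbabilityMeasure P]
    (X Y : Ω → ℝ) (hX : Measurable X) (hY : Measurable Y)
    (a₁ a₂ : ℝ) (ha : a₁ < a₂)
    (hXval : ∀ ω, X ω = a₁ ∨ X ω = a₂)
    (hXa₁ : 0 < P {ω | X ω = a₁}) (hXa₂ : 0 < P {ω | X ω = a₂})
    (hYint : Integrable Y P) :
    (∀ A B : Set ℝ, MeasurableSet A → MeasurableSet B →
      P ({ω | X ω ∈ A} ∩ {ω | Y ω ∈ B}) = P {ω | X ω ∈ A} * P {ω | Y ω ∈ B}) ↔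
    ∀ t : ℝ, 0 < P {ω | Y ω ≤ t} →
      cexp P {ω | Y ω ≤ t} (fun ω => X ω * Y ω)
        = cexp P {ω | Y ω ≤ t} X * cexp P {ω | Y ω ≤ t} Y :=
  stmt_15_general P X Y hX hY a₁ a₂ ha hXval hYint
end

section
/- Let X and Y be real-valued random variables with E|X| < ∞, E|Y| < ∞ and ℙ(Y > 0) = 1. Suppose that for every pair of bounded closed intervals A, B with ℙ(X ∈ A, Y ∈ B) > 0, setting U = {X ∈ A, Y ∈ B}, one has E[XY | U] = E[X | U] · E[Y | U]. Then for every Borel set A ⊆ ℝ and every bounded closed interval B with ℙ(X ∈ A, Y ∈ B) > 0, one has E[Y | X ∈ A, Y ∈ B] = E[Y | Y ∈ B]. -/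
/-!
Fix the event `V = {Y ∈ [c, d]}`, let `μ` be the law of `X` on `V` and `ν` the law of `X` on `V`
weighted by `Y`, so that `0 ≤ ν ≤ d • μ`. The hypothesis says that `μ` and `ν` have the same
barycentre on every interval. By inclusion–exclusion this gives a cross identity for two disjoint
intervals, and for balls of radius `ε` around `u < v` it yields
`|ν(B(u, ε))/μ(B(u, ε)) - ν(B(v, ε))/μ(B(v, ε))| ≤ 4 ε d / (v - u)`.
Letting `ε → 0` along radii avoiding the countably many atoms of `μ`, Besicovitch differentiation
shows that `dν/dμ` is `μ`-a.e. constant. Hence `ν = k • μ`, and `E[Y | X ∈ A, V] = ν(A)/μ(A) = k`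
for every `A` with `μ(A) > 0`, in particular for `A = ℝ`.
-/

open MeasureTheory Set

open Filter Topology Metric
open scoped ENNReal NNReal

lemma MeasureTheory.Measure.countable_setOf_measure_singleton_ne_zero {α : Type*}
    [MeasurableSpace α] [MeasurableSingletonClass α] (μ : Measure α) [SFinite μ] :
    {x : α | μ {x} ≠ 0}.Countable := by
  simpa only [pos_iff_ne_zero] using Measure.countable_meas_pos_of_disjoint_iUnion
    (As := fun x : α => {x}) measurableSet_singleton fun _ _ hxy => disjoint_singleton.2 hxy

lemma measureReal_le_of_le_smul {α : Type*} [MeasurableSpace α] {μ ν : Measure α}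
    [IsFiniteMeasure μ] {C : ℝ≥0} (hle : ν ≤ C • μ) (s : Set α) : ν.real s ≤ C * μ.real s := by
  rw [← measureReal_nnreal_smul_apply]
  exact ENNReal.toReal_mono (measure_ne_top _ _) (hle s)

section AdjacentIcc

variable {μ : Measure ℝ} {p q r : ℝ}

lemma aedisjoint_Icc_Icc (hq : μ {q} = 0) : AEDisjoint μ (Icc p q) (Icc q r) :=
  measure_mono_null (fun x ⟨⟨_, hxq⟩, hqx, _⟩ => (le_antisymm hxq hqx : x = q)) hq

lemma measureReal_Icc_eq_add [IsFiniteMeasure μ] (hpq : p ≤ q) (hqr : q ≤ r) (hq : μ {q} = 0) :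
    μ.real (Icc p r) = μ.real (Icc p q) + μ.real (Icc q r) := by
  rw [← Icc_union_Icc_eq_Icc hpq hqr,
    measureReal_union₀ measurableSet_Icc.nullMeasurableSet (aedisjoint_Icc_Icc hq)]

lemma setIntegral_Icc_eq_add {f : ℝ → ℝ} (hf : IntegrableOn f (Icc p r) μ) (hpq : p ≤ q)
    (hqr : q ≤ r) (hq : μ {q} = 0) :
    ∫ x in Icc p r, f x ∂μ = ∫ x in Icc p q, f x ∂μ + ∫ x in Icc q r, f x ∂μ := by
  rw [← Icc_union_Icc_eq_Icc hpq hqr] at hf ⊢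
  exact setIntegral_union₀ (aedisjoint_Icc_Icc hq) measurableSet_Icc.nullMeasurableSet
    (hf.mono_set subset_union_left) (hf.mono_set subset_union_right)

end AdjacentIcc

lemma abs_setIntegral_id_sub_mul_le {μ : Measure ℝ} [IsFiniteMeasure μ] {s : Set ℝ} {u ε : ℝ}
    (hs : s ⊆ closedBall u ε) :
    |∫ x in s, x ∂μ - u * μ.real s| ≤ ε * μ.real s := by
  have hint : IntegrableOn (fun x : ℝ => x) s μ := by
    refine (continuous_id.integrableOn_Icc (a := u - ε) (b := u + ε)).mono_set ?_
    rwa [← Real.closedBall_eq_Icc]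
  rw [mul_comm u, ← smul_eq_mul, ← setIntegral_const, ← integral_sub hint (integrable_const u)]
  exact norm_setIntegral_le_of_norm_le_const (f := fun x => x - u) (measure_lt_top μ s)
    fun x hx => mem_closedBall.1 (hs hx)

/-- `a, b` are the masses of `μ, ν` on a set near `u` and `m, n` their first moments there; primed
quantities refer to a set near `v`. -/
lemma abs_sub_mul_abs_mul_sub_mul_le {u v ε C a a' b b' m m' n n' : ℝ}
    (ha : 0 ≤ a) (ha' : 0 ≤ a') (hb : 0 ≤ b) (hb' : 0 ≤ b') (hba : b ≤ C * a) (hba' : b' ≤ C * a')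
    (hm : |m - u * a| ≤ ε * a) (hm' : |m' - v * a'| ≤ ε * a')
    (hn : |n - u * b| ≤ ε * b) (hn' : |n' - v * b'| ≤ ε * b')
    (hcross : n * a' + n' * a = m * b' + m' * b) :
    |v - u| * |b * a' - a * b'| ≤ 4 * ε * C * (a * a') := by
  have key : (v - u) * (b * a' - a * b')
      = (n - u * b) * a' + (n' - v * b') * a - (m - u * a) * b' - (m' - v * a') * b := by
    linear_combination -hcross
  have hεa : 0 ≤ ε * a := (abs_nonneg _).trans hm
  have hεa' : 0 ≤ ε * a' := (abs_nonneg _).trans hm'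
  have h₁ : |(n - u * b) * a'| ≤ ε * C * (a * a') := by
    rw [abs_mul, abs_of_nonneg ha']
    nlinarith [mul_le_mul_of_nonneg_right hn ha', mul_le_mul_of_nonneg_left hba hεa']
  have h₂ : |(n' - v * b') * a| ≤ ε * C * (a * a') := by
    rw [abs_mul, abs_of_nonneg ha]
    nlinarith [mul_le_mul_of_nonneg_right hn' ha, mul_le_mul_of_nonneg_left hba' hεa]
  have h₃ : |(m - u * a) * b'| ≤ ε * C * (a * a') := by
    rw [abs_mul, abs_of_nonneg hb']
    nlinarith [mul_le_mul_of_nonneg_right hm hb', mul_le_mul_of_nonneg_left hba' hεa]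
  have h₄ : |(m' - v * a') * b| ≤ ε * C * (a * a') := by
    rw [abs_mul, abs_of_nonneg hb]
    nlinarith [mul_le_mul_of_nonneg_right hm' hb, mul_le_mul_of_nonneg_left hba hεa']
  rw [← abs_mul, key, abs_le]
  rw [abs_le] at h₁ h₂ h₃ h₄
  constructor <;> linarith [h₁.1, h₁.2, h₂.1, h₂.2, h₃.1, h₃.2, h₄.1, h₄.2]

/-- Cross-multiplied form of: `μ` and `ν` have the same barycentre on every `Icc p q` that both
charge. -/
def SameBarycenterOnIcc (μ ν : Measure ℝ) : Prop :=
  ∀ p q : ℝ,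
    (∫ x in Icc p q, x ∂ν) * μ.real (Icc p q) = (∫ x in Icc p q, x ∂μ) * ν.real (Icc p q)

namespace SameBarycenterOnIcc

variable {μ ν : Measure ℝ} [IsFiniteMeasure μ] [IsFiniteMeasure ν]

/-- Inclusion–exclusion over `Icc p s ⊇ Icc p r, Icc q s ⊇ Icc q r`: the diagonal terms cancel. -/
lemma cross (h : SameBarycenterOnIcc μ ν) {p q r s : ℝ} (hpq : p ≤ q) (hqr : q ≤ r)
    (hrs : r ≤ s) (hμq : μ {q} = 0) (hμr : μ {r} = 0) (hνq : ν {q} = 0) (hνr : ν {r} = 0) :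
    (∫ x in Icc p q, x ∂ν) * μ.real (Icc r s) + (∫ x in Icc r s, x ∂ν) * μ.real (Icc p q)
      = (∫ x in Icc p q, x ∂μ) * ν.real (Icc r s)
        + (∫ x in Icc r s, x ∂μ) * ν.real (Icc p q) := by
  have hid : ∀ {a b : ℝ} (ρ : Measure ℝ) [IsFiniteMeasure ρ],
      IntegrableOn (fun x : ℝ => x) (Icc a b) ρ := fun _ => continuous_id.integrableOn_Icc
  have hpr := h p r
  have hqs := h q s
  have hps := h p s
  rw [measureReal_Icc_eq_add hpq hqr hμq, setIntegral_Icc_eq_add (hid μ) hpq hqr hμq,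
    measureReal_Icc_eq_add hpq hqr hνq, setIntegral_Icc_eq_add (hid ν) hpq hqr hνq] at hpr
  rw [measureReal_Icc_eq_add hqr hrs hμr, setIntegral_Icc_eq_add (hid μ) hqr hrs hμr,
    measureReal_Icc_eq_add hqr hrs hνr, setIntegral_Icc_eq_add (hid ν) hqr hrs hνr] at hqs
  rw [measureReal_Icc_eq_add hpq (hqr.trans hrs) hμq,
    setIntegral_Icc_eq_add (hid μ) hpq (hqr.trans hrs) hμq,
    measureReal_Icc_eq_add hpq (hqr.trans hrs) hνq,
    setIntegral_Icc_eq_add (hid ν) hpq (hqr.trans hrs) hνq,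
    measureReal_Icc_eq_add hqr hrs hμr, setIntegral_Icc_eq_add (hid μ) hqr hrs hμr,
    measureReal_Icc_eq_add hqr hrs hνr, setIntegral_Icc_eq_add (hid ν) hqr hrs hνr] at hps
  linear_combination hps - hpr - hqs + h q r

lemma abs_ratio_sub_le (h : SameBarycenterOnIcc μ ν) {C : ℝ≥0} (hle : ν ≤ C • μ) {u v ε : ℝ}
    (hε : 0 < ε) (huv : u + ε ≤ v - ε) (hμu : μ {u + ε} = 0) (hμv : μ {v - ε} = 0)
    (hu : u ∈ μ.support) (hv : v ∈ μ.support) :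
    |ν.real (closedBall u ε) / μ.real (closedBall u ε)
      - ν.real (closedBall v ε) / μ.real (closedBall v ε)| ≤ 4 * ε * C / (v - u) := by
  have hac := Measure.absolutelyContinuous_of_le_smul hle
  have hpos : ∀ {w}, w ∈ μ.support → 0 < μ.real (closedBall w ε) := fun hw =>
    ENNReal.toReal_pos ((μ.mem_support_iff_forall _).1 hw _ (closedBall_mem_nhds _ hε)).ne'
      (measure_ne_top _ _)
  have hcross := h.cross (p := u - ε) (s := v + ε) (by linarith) huv (by linarith) hμu hμv
    (hac hμu) (hac hμv)
  simp only [← Real.closedBall_eq_Icc] at hcross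
  have hbound := abs_sub_mul_abs_mul_sub_mul_le measureReal_nonneg measureReal_nonneg
    measureReal_nonneg measureReal_nonneg (measureReal_le_of_le_smul hle _)
    (measureReal_le_of_le_smul hle _) (abs_setIntegral_id_sub_mul_le subset_rfl)
    (abs_setIntegral_id_sub_mul_le subset_rfl) (abs_setIntegral_id_sub_mul_le subset_rfl)
    (abs_setIntegral_id_sub_mul_le subset_rfl) hcross
  have hvu : 0 < v - u := by linarith
  rw [abs_of_pos hvu] at hbound
  have huv' := mul_pos (hpos hu) (hpos hv)
  rw [div_sub_div _ _ (hpos hu).ne' (hpos hv).ne', abs_div, abs_of_pos huv',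
    div_le_div_iff₀ huv' hvu]
  linarith

/-- Radii `r` for which `u + r` and `v - r` are not atoms of `μ` accumulate at `0`; along them
`abs_ratio_sub_le` forces the two ratio limits together. -/
lemma eq_of_tendsto_ratio (h : SameBarycenterOnIcc μ ν) {C : ℝ≥0} (hle : ν ≤ C • μ)
    {u v a b : ℝ} (huv : u < v) (hu : u ∈ μ.support) (hv : v ∈ μ.support)
    (ha : Tendsto (fun r => ν.real (closedBall u r) / μ.real (closedBall u r)) (𝓝[>] 0) (𝓝 a))
    (hb : Tendsto (fun r => ν.real (closedBall v r) / μ.real (closedBall v r)) (𝓝[>] 0) (𝓝 b)) :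
    a = b := by
  set atoms := {x : ℝ | μ {x} ≠ 0}
  set D : Set ℝ := (u + ·) ⁻¹' atoms ∪ (v - ·) ⁻¹' atoms
  have hD : D.Countable :=
    ((Measure.countable_setOf_measure_singleton_ne_zero μ).preimage (add_right_injective u)).union
      ((Measure.countable_setOf_measure_singleton_ne_zero μ).preimage (sub_right_injective))
  set L := 𝓝[Ioi 0 ∩ Dᶜ] (0 : ℝ)
  have : L.NeBot := by
    refine mem_closure_iff_nhdsWithin_neBot.1 <| closure_minimal
      ((hD.dense_compl ℝ).open_subset_closure_inter isOpen_Ioi) isClosed_closure ?_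
    rw [closure_Ioi]
    exact self_mem_Ici
  have hL : L ≤ 𝓝[>] 0 := nhdsWithin_mono _ inter_subset_left
  have hdiff := (ha.mono_left hL).sub (hb.mono_left hL)
  have hbound : Tendsto (fun r : ℝ => 4 * r * C / (v - u)) L (𝓝 0) := by
    have : Continuous fun r : ℝ => 4 * r * C / (v - u) := by fun_prop
    simpa using (this.tendsto 0).mono_left nhdsWithin_le_nhds
  have hsmall : ∀ᶠ r in L, r < (v - u) / 2 :=
    nhdsWithin_le_nhds (Iio_mem_nhds (by linarith))
  have hclose : ∀ᶠ r in L, ‖ν.real (closedBall u r) / μ.real (closedBall u r)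
      - ν.real (closedBall v r) / μ.real (closedBall v r)‖ ≤ 4 * r * C / (v - u) := by
    filter_upwards [self_mem_nhdsWithin, hsmall] with r ⟨hr, hrD⟩ hr'
    simp only [D, atoms, mem_compl_iff, mem_union, mem_preimage, mem_ofPred_eq,
      not_or, not_not] at hrD
    exact h.abs_ratio_sub_le hle hr (by linarith) hrD.1 hrD.2 hu hv
  exact sub_eq_zero.1 (tendsto_nhds_unique hdiff (squeeze_zero_norm' hclose hbound))

theorem exists_eq_smul (h : SameBarycenterOnIcc μ ν) {C : ℝ≥0} (hle : ν ≤ C • μ) :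
    ∃ k : ℝ≥0∞, ν = k • μ := by
  rcases eq_or_ne μ 0 with rfl | hμ
  · exact ⟨0, by simpa using le_antisymm (by simpa using hle) (Measure.zero_le ν)⟩
  have hgood : ∀ᵐ x ∂μ, x ∈ μ.support ∧ ν.rnDeriv μ x ≠ ∞ ∧
      Tendsto (fun r => ν.real (closedBall x r) / μ.real (closedBall x r)) (𝓝[>] 0)
        (𝓝 (ν.rnDeriv μ x).toReal) := by
    filter_upwards [Measure.support_mem_ae, Measure.rnDeriv_lt_top ν μ,
      Besicovitch.ae_tendsto_rnDeriv ν μ] with x hsupp hfin hlim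
    refine ⟨hsupp, hfin.ne, ?_⟩
    simpa [Function.comp_def, ENNReal.toReal_div, measureReal_def] using
      (ENNReal.tendsto_toReal hfin.ne).comp hlim
  have : (ae μ).NeBot := ae_neBot.2 hμ
  obtain ⟨x₀, hx₀⟩ := hgood.exists
  have hconst : ν.rnDeriv μ =ᵐ[μ] fun _ => ν.rnDeriv μ x₀ := by
    filter_upwards [hgood] with x hx
    refine (ENNReal.toReal_eq_toReal_iff' hx.2.1 hx₀.2.1).1 ?_
    rcases lt_trichotomy x x₀ with hlt | rfl | hlt
    · exact h.eq_of_tendsto_ratio hle hlt hx.1 hx₀.1 hx.2.2 hx₀.2.2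
    · rfl
    · exact (h.eq_of_tendsto_ratio hle hlt hx₀.1 hx.1 hx₀.2.2 hx.2.2).symm
  refine ⟨ν.rnDeriv μ x₀, ?_⟩
  rw [← withDensity_const, ← withDensity_congr_ae hconst,
    Measure.withDensity_rnDeriv_eq ν μ (Measure.absolutelyContinuous_of_le_smul hle)]

end SameBarycenterOnIcc

section LawOn

variable {Ω : Type*} [MeasurableSpace Ω] {P Q : Measure Ω} {V : Set Ω} {X Y : Ω → ℝ}

noncomputable def lawOn (Q : Measure Ω) (V : Set Ω) (X : Ω → ℝ) : Measure ℝ := (Q.restrict V).map X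

instance [IsFiniteMeasure Q] : IsFiniteMeasure (lawOn Q V X) := by
  unfold lawOn; infer_instance

lemma lawOn_apply (hX : Measurable X) {S : Set ℝ} (hS : MeasurableSet S) :
    lawOn Q V X S = Q (X ⁻¹' S ∩ V) := by
  rw [lawOn, Measure.map_apply hX hS, Measure.restrict_apply (hX hS)]

lemma measureReal_lawOn (hX : Measurable X) {S : Set ℝ} (hS : MeasurableSet S) :
    (lawOn Q V X).real S = Q.real (X ⁻¹' S ∩ V) := by
  rw [measureReal_def, lawOn_apply hX hS, measureReal_def]

lemma setIntegral_id_lawOn (hX : Measurable X) {S : Set ℝ} (hS : MeasurableSet S) :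
    ∫ x in S, x ∂lawOn Q V X = ∫ ω in X ⁻¹' S ∩ V, X ω ∂Q := by
  rw [lawOn, setIntegral_map (f := fun x => x) hS aestronglyMeasurable_id hX.aemeasurable,
    Measure.restrict_restrict (hX hS)]

lemma lawOn_withDensity_le (hX : Measurable X) (hV : MeasurableSet V) {C : ℝ≥0}
    (hYC : ∀ ω ∈ V, Y ω ≤ C) :
    lawOn (P.withDensity fun ω => ENNReal.ofReal (Y ω)) V X ≤ C • lawOn P V X := by
  have hdens : (P.restrict V).withDensity (fun ω => ENNReal.ofReal (Y ω))
      ≤ (P.restrict V).withDensity fun _ => (C : ℝ≥0∞) := by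
    refine withDensity_mono ((ae_restrict_mem hV).mono fun ω hω => ?_)
    simpa using ENNReal.ofReal_le_ofReal (hYC ω hω)
  rw [lawOn, lawOn, restrict_withDensity hV, ENNReal.smul_def, ← Measure.map_smul,
    ← withDensity_const]
  exact Measure.map_mono hdens hX

lemma measureReal_withDensity_ofReal (hY : Measurable Y) (hY0 : 0 ≤ᵐ[P] Y) {T : Set Ω}
    (hT : MeasurableSet T) :
    (P.withDensity fun ω => ENNReal.ofReal (Y ω)).real T = ∫ ω in T, Y ω ∂P := by
  rw [measureReal_def, withDensity_apply _ hT,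
    integral_eq_lintegral_of_nonneg_ae (ae_restrict_of_ae hY0) hY.aestronglyMeasurable]

lemma setIntegral_withDensity_ofReal (hY : Measurable Y) (hY0 : 0 ≤ᵐ[P] Y) {T : Set Ω}
    (hT : MeasurableSet T) (f : Ω → ℝ) :
    ∫ ω in T, f ω ∂P.withDensity (fun ω => ENNReal.ofReal (Y ω)) = ∫ ω in T, f ω * Y ω ∂P := by
  refine (setIntegral_withDensity_eq_setIntegral_smul hY.real_toNNReal f hT).trans ?_
  refine setIntegral_congr_ae hT (hY0.mono fun ω hω _ => ?_)
  rw [NNReal.smul_def, Real.coe_toNNReal _ hω, smul_eq_mul, mul_comm]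

end LawOn

section Conditioning

variable {Ω : Type*} [MeasurableSpace Ω] {P : Measure Ω} {X Y : Ω → ℝ}

lemma integral_mul_measureReal_eq_of_cexp_mul_eq [IsFiniteMeasure P] {U : Set Ω}
    (h : 0 < P U → cexp P U (fun ω => X ω * Y ω) = cexp P U X * cexp P U Y) :
    (∫ ω in U, X ω * Y ω ∂P) * P.real U = (∫ ω in U, X ω ∂P) * ∫ ω in U, Y ω ∂P := by
  rcases eq_or_ne (P U) 0 with hU | hU
  · simp [Measure.restrict_eq_zero.2 hU]
  have hU' : P.real U ≠ 0 := (ENNReal.toReal_pos hU (measure_ne_top _ _)).ne'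
  have hcexp := h (pos_iff_ne_zero.2 hU)
  simp only [cexp, ← measureReal_def] at hcexp
  field_simp at hcexp
  linear_combination hcexp

variable {V : Set Ω}

lemma sameBarycenterOnIcc_lawOn [IsFiniteMeasure P] (hX : Measurable X) (hY : Measurable Y)
    (hY0 : 0 ≤ᵐ[P] Y) (hV : MeasurableSet V)
    (h : ∀ p q : ℝ, 0 < P (X ⁻¹' Icc p q ∩ V) →
      cexp P (X ⁻¹' Icc p q ∩ V) (fun ω => X ω * Y ω)
        = cexp P (X ⁻¹' Icc p q ∩ V) X * cexp P (X ⁻¹' Icc p q ∩ V) Y) :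
    SameBarycenterOnIcc (lawOn P V X) (lawOn (P.withDensity fun ω => ENNReal.ofReal (Y ω)) V X) :=
  fun p q => by
    have hT : MeasurableSet (X ⁻¹' Icc p q ∩ V) := (hX measurableSet_Icc).inter hV
    rw [setIntegral_id_lawOn hX measurableSet_Icc, setIntegral_id_lawOn hX measurableSet_Icc,
      measureReal_lawOn hX measurableSet_Icc, measureReal_lawOn hX measurableSet_Icc,
      setIntegral_withDensity_ofReal hY hY0 hT, measureReal_withDensity_ofReal hY hY0 hT]
    exact integral_mul_measureReal_eq_of_cexp_mul_eq (h p q)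

lemma cexp_preimage_inter_eq_div (hX : Measurable X) (hY : Measurable Y) (hY0 : 0 ≤ᵐ[P] Y)
    (hV : MeasurableSet V) {S : Set ℝ} (hS : MeasurableSet S) :
    cexp P (X ⁻¹' S ∩ V) Y = (lawOn (P.withDensity fun ω => ENNReal.ofReal (Y ω)) V X).real S
      / (lawOn P V X).real S := by
  rw [cexp, ← measureReal_def, ← measureReal_withDensity_ofReal hY hY0 ((hX hS).inter hV),
    ← measureReal_lawOn hX hS, ← measureReal_lawOn hX hS]

end Conditioning

theorem stmt_16_general {Ω : Type*} [MeasurableSpace Ω] (P : Measure Ω) [IsProbabilityMeasure P]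
    (X Y : Ω → ℝ) (hX : Measurable X) (hY : Measurable Y)
    (hYpos : P {ω | 0 < Y ω} = 1)
    (h : ∀ a b c d : ℝ, 0 < P {ω | X ω ∈ Icc a b ∧ Y ω ∈ Icc c d} →
      cexp P {ω | X ω ∈ Icc a b ∧ Y ω ∈ Icc c d} (fun ω => X ω * Y ω)
        = cexp P {ω | X ω ∈ Icc a b ∧ Y ω ∈ Icc c d} X
          * cexp P {ω | X ω ∈ Icc a b ∧ Y ω ∈ Icc c d} Y) :
    ∀ A : Set ℝ, MeasurableSet A → ∀ c d : ℝ,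
      0 < P {ω | X ω ∈ A ∧ Y ω ∈ Icc c d} →
      cexp P {ω | X ω ∈ A ∧ Y ω ∈ Icc c d} Y = cexp P {ω | Y ω ∈ Icc c d} Y := by
  intro A hA c d hpos
  set V := Y ⁻¹' Icc c d
  have hV : MeasurableSet V := hY measurableSet_Icc
  have hY0 : 0 ≤ᵐ[P] Y := by
    have hYpos' : ∀ᵐ ω ∂P, 0 < Y ω :=
      mem_ae_iff.2 ((prob_compl_eq_zero_iff (hY measurableSet_Ioi)).2 hYpos)
    filter_upwards [hYpos'] with ω hω using hω.le
  have hle : lawOn (P.withDensity fun ω => ENNReal.ofReal (Y ω)) V X ≤ d.toNNReal • lawOn P V X :=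
    lawOn_withDensity_le hX hV fun _ hω => hω.2.trans (Real.le_coe_toNNReal d)
  have := isFiniteMeasure_of_le _ hle
  obtain ⟨k, hk⟩ :=
    (sameBarycenterOnIcc_lawOn hX hY hY0 hV fun p q => h p q c d).exists_eq_smul hle
  have hcexp : ∀ S, MeasurableSet S → lawOn P V X S ≠ 0 → cexp P (X ⁻¹' S ∩ V) Y = k.toReal := by
    intro S hS hS0
    have hS0' : (lawOn P V X).real S ≠ 0 := (ENNReal.toReal_pos hS0 (measure_ne_top _ _)).ne'
    rw [cexp_preimage_inter_eq_div hX hY hY0 hV hS, hk, measureReal_ennreal_smul_apply,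
      mul_div_assoc, div_self hS0', mul_one]
  have hA0 : lawOn P V X A ≠ 0 := by
    rw [lawOn_apply hX hA]
    exact hpos.ne'
  calc cexp P {ω | X ω ∈ A ∧ Y ω ∈ Icc c d} Y = k.toReal := hcexp A hA hA0
    _ = cexp P (X ⁻¹' univ ∩ V) Y :=
      (hcexp univ .univ fun h0 => hA0 (measure_mono_null (subset_univ A) h0)).symm
    _ = cexp P {ω | Y ω ∈ Icc c d} Y := by rw [preimage_univ, univ_inter]; rfl

theorem stmt_16 {Ω : Type*} [MeasurableSpace Ω] (P : Measure Ω) [IsProbabilityMeasure P]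
    (X Y : Ω → ℝ) (hX : Measurable X) (hY : Measurable Y)
    (hXint : Integrable X P) (hYint : Integrable Y P)
    (hYpos : P {ω | 0 < Y ω} = 1)
    (h : ∀ a b c d : ℝ, 0 < P {ω | X ω ∈ Icc a b ∧ Y ω ∈ Icc c d} →
      cexp P {ω | X ω ∈ Icc a b ∧ Y ω ∈ Icc c d} (fun ω => X ω * Y ω)
        = cexp P {ω | X ω ∈ Icc a b ∧ Y ω ∈ Icc c d} X
          * cexp P {ω | X ω ∈ Icc a b ∧ Y ω ∈ Icc c d} Y) :
    ∀ A : Set ℝ, MeasurableSet A → ∀ c d : ℝ,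
      0 < P {ω | X ω ∈ A ∧ Y ω ∈ Icc c d} →
      cexp P {ω | X ω ∈ A ∧ Y ω ∈ Icc c d} Y = cexp P {ω | Y ω ∈ Icc c d} Y :=
  stmt_16_general P X Y hX hY hYpos h
end

section
/- For p ∈ (0,1), let μ_p be the Borel probability measure on ℝ with density f_p(t) = p·1_{[0,1]}(t) + (1−p)·1_{[2,3]}(t) with respect to Lebesgue measure. Then for every ε ∈ (0,1) and all p, q ∈ (0,1): (i) for every interval [a,b] with 0 < b − a < ε, μ_p([a,b]) > 0 if and only if μ_q([a,b]) > 0, and whenever these are positive, (∫_{[a,b]} x dμ_p(x))/μ_p([a,b]) = (∫_{[a,b]} x dμ_q(x))/μ_q([a,b]); (ii) nevertheless, μ_p ≠ μ_q whenever p ≠ q. In particular, the conditional first moments over intervals of length less than ε do not determine the distribution. -/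
open MeasureTheory Set

/-- The density `f_p(t) = p·1_{[0,1]}(t) + (1−p)·1_{[2,3]}(t)`. -/
noncomputable def fdens (p : ℝ) (t : ℝ) : ℝ :=
  p * (Icc (0 : ℝ) 1).indicator (fun _ => (1 : ℝ)) t
    + (1 - p) * (Icc (2 : ℝ) 3).indicator (fun _ => (1 : ℝ)) t

/-- The Borel probability measure on `ℝ` with density `f_p` w.r.t. Lebesgue measure. -/
noncomputable def μmix (p : ℝ) : Measure ℝ :=
  volume.withDensity fun t => ENNReal.ofReal (fdens p t)

/-!
An interval of length less than `1` cannot meet both `[0, 1]` and `[2, 3]`, so on it every `μ_p`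
is a positive multiple (`p` or `1 - p`) of one and the same measure, and a conditional first
moment does not change when the measure is scaled. The measures are nevertheless told apart by
`μ_p([0, 1]) = p`.
-/

open scoped ENNReal

noncomputable def condFirstMoment (μ : Measure ℝ) (s : Set ℝ) : ℝ :=
  (∫ x in s, x ∂μ) / (μ s).toReal

lemma measure_pos_iff_of_restrict_eq_smul {α : Type*} [MeasurableSpace α] {μ ν : Measure α}
    {s : Set α} {c : ℝ≥0∞} (h : μ.restrict s = c • ν.restrict s) (hc : c ≠ 0) :
    0 < μ s ↔ 0 < ν s := by
  rw [← Measure.restrict_apply_univ, h, Measure.smul_apply, Measure.restrict_apply_univ,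
    smul_eq_mul, ENNReal.mul_pos_iff]
  exact and_iff_right (pos_iff_ne_zero.mpr hc)

lemma condFirstMoment_eq_of_restrict_eq_smul {μ ν : Measure ℝ} {s : Set ℝ} {c : ℝ≥0∞}
    (h : μ.restrict s = c • ν.restrict s) (hc0 : c ≠ 0) (hc : c ≠ ∞) :
    condFirstMoment μ s = condFirstMoment ν s := by
  have hμs : μ s = c * ν s := by
    rw [← Measure.restrict_apply_univ, h, Measure.smul_apply, Measure.restrict_apply_univ,
      smul_eq_mul]
  rw [condFirstMoment, condFirstMoment, h, integral_smul_measure, hμs, ENNReal.toReal_mul,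
    smul_eq_mul, mul_div_mul_left _ _ (ENNReal.toReal_pos hc0 hc).ne']

lemma ofReal_fdens (p : ℝ) :
    (fun t => ENNReal.ofReal (fdens p t))
      = (Icc (0 : ℝ) 1).indicator (fun _ => ENNReal.ofReal p)
        + (Icc (2 : ℝ) 3).indicator (fun _ => ENNReal.ofReal (1 - p)) := by
  funext t
  by_cases h1 : t ∈ Icc (0 : ℝ) 1 <;> by_cases h2 : t ∈ Icc (2 : ℝ) 3 <;>
    simp [fdens, h1, h2]
  linarith [h1.2, h2.1]

lemma μmix_eq (p : ℝ) :
    μmix p = ENNReal.ofReal p • volume.restrict (Icc 0 1)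
      + ENNReal.ofReal (1 - p) • volume.restrict (Icc 2 3) := by
  rw [μmix, ofReal_fdens, withDensity_add_left (measurable_const.indicator measurableSet_Icc),
    withDensity_indicator measurableSet_Icc, withDensity_indicator measurableSet_Icc,
    withDensity_const, withDensity_const]

lemma volume_Icc_inter_Icc_eq_zero {a b c d : ℝ} (h : b < c ∨ d < a) :
    volume (Icc a b ∩ Icc c d) = 0 := by
  rw [Icc_inter_Icc, Real.volume_Icc, ENNReal.ofReal_eq_zero, sub_nonpos]
  rcases h with h | h
  · exact (min_le_left b d).trans (h.le.trans (le_max_right a c))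
  · exact (min_le_right b d).trans (h.le.trans (le_max_left a c))

lemma restrict_restrict_Icc_eq_zero {a b c d : ℝ} (h : b < c ∨ d < a) :
    (volume.restrict (Icc c d)).restrict (Icc a b) = 0 := by
  rw [Measure.restrict_restrict measurableSet_Icc, Measure.restrict_eq_zero,
    volume_Icc_inter_Icc_eq_zero h]

lemma exists_restrict_μmix_eq_smul {a b : ℝ} (hab : b - a < 1) :
    ∃ ν : Measure ℝ, ∀ p ∈ Ioo (0 : ℝ) 1, ∃ c : ℝ≥0∞, c ≠ 0 ∧ c ≠ ∞ ∧
      (μmix p).restrict (Icc a b) = c • ν.restrict (Icc a b) := by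
  rcases lt_or_ge b 2 with hb | hb
  · refine ⟨volume.restrict (Icc 0 1), fun p hp => ⟨ENNReal.ofReal p, by simpa using hp.1,
      ENNReal.ofReal_ne_top, ?_⟩⟩
    rw [μmix_eq, Measure.restrict_add, Measure.restrict_smul, Measure.restrict_smul,
      restrict_restrict_Icc_eq_zero (Or.inl hb), smul_zero, add_zero]
  · refine ⟨volume.restrict (Icc 2 3), fun p hp => ⟨ENNReal.ofReal (1 - p),
      by simpa using hp.2, ENNReal.ofReal_ne_top, ?_⟩⟩
    rw [μmix_eq, Measure.restrict_add, Measure.restrict_smul, Measure.restrict_smul,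
      restrict_restrict_Icc_eq_zero (Or.inr (by linarith)), smul_zero, zero_add]

lemma μmix_Icc_zero_one (p : ℝ) : μmix p (Icc 0 1) = ENNReal.ofReal p := by
  simp [μmix_eq, Measure.restrict_apply measurableSet_Icc,
    volume_Icc_inter_Icc_eq_zero (Or.inl one_lt_two : (1 : ℝ) < 2 ∨ _)]

theorem stmt_18 :
    ∀ ε ∈ Ioo (0 : ℝ) 1, ∀ p ∈ Ioo (0 : ℝ) 1, ∀ q ∈ Ioo (0 : ℝ) 1,
      (∀ a b : ℝ, 0 < b - a → b - a < ε →
        ((0 < μmix p (Icc a b) ↔ 0 < μmix q (Icc a b)) ∧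
          (0 < μmix p (Icc a b) → 0 < μmix q (Icc a b) →
            (∫ x in Icc a b, x ∂μmix p) / (μmix p (Icc a b)).toReal
              = (∫ x in Icc a b, x ∂μmix q) / (μmix q (Icc a b)).toReal)))
      ∧ (p ≠ q → μmix p ≠ μmix q) := by
  rintro ε ⟨-, hε⟩ p hp q hq
  refine ⟨fun a b _ hab => ?_, fun hpq h => hpq ?_⟩
  · obtain ⟨ν, hν⟩ := exists_restrict_μmix_eq_smul (hab.trans hε)
    obtain ⟨c, hc0, hc, hpν⟩ := hν p hp
    obtain ⟨d, hd0, hd, hqν⟩ := hν q hq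
    exact ⟨(measure_pos_iff_of_restrict_eq_smul hpν hc0).trans
        (measure_pos_iff_of_restrict_eq_smul hqν hd0).symm,
      fun _ _ => (condFirstMoment_eq_of_restrict_eq_smul hpν hc0 hc).trans
        (condFirstMoment_eq_of_restrict_eq_smul hqν hd0 hd).symm⟩
  · have h01 := congrArg (· (Icc 0 1)) h
    simp only [μmix_Icc_zero_one] at h01
    exact (ENNReal.ofReal_eq_ofReal_iff hp.1.le hq.1.le).mp h01
end
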